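/- Let θ₁,...,θ_n be i.i.d. uniform random points on S^d. Then with probability at least 1 - δ, the separation distance satisfies min_{i≠j} ρ(θ_i, θ_j) ≲ (log(1/δ)/n²)^{1/d}, with implied constant depending only on d. In particular, i.i.d. uniform random points fail to be quasi-uniform with high probability: the separation distance is of order n^{-2/d} rather than n^{-1/d}. -/

import Mathlib

open MeasureTheory ProbabilityTheory
open scoped RealInnerProductSpace

/-- geodesic distance on the unit sphere of `ℝ^{d+1}` -/
noncomputable def geoDist {d : ℕ} (x y : EuclideanSpace ℝ (Fin (d + 1))) : ℝ :=
  Real.arccos ⟪x, y⟫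

/-- the uniform (normalized surface-area) probability distribution on `S^d` -/
noncomputable def unifSphere (d : ℕ) :
    Measure (Metric.sphere (0 : EuclideanSpace ℝ (Fin (d + 1))) 1) :=
  ((volume : Measure (EuclideanSpace ℝ (Fin (d + 1)))).toSphere Set.univ)⁻¹ •
    (volume : Measure (EuclideanSpace ℝ (Fin (d + 1)))).toSphere

/-!
Cover the sphere by the Voronoi cells of a maximal `r`-separated set: each cell has diameter at
most `2 r` and contains a cap of radius `r / 2`, hence has mass at least `p ≍ r ^ d`. The
probability that `n` independent points fall into distinct cells is at most
`∏_{k < n} (1 - k p) ≤ exp (-p n (n - 1) / 2)` (birthday problem), which is at most `δ` once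
`p = 4 log (1 / δ) / n ^ 2`. Otherwise two of the points share a cell, so they are at distance
`≲ r ≍ (log (1 / δ) / n ^ 2) ^ (1 / d)`.
-/

open scoped NNReal ENNReal Pointwise

section Birthday

open Finset

variable {α : Type*} [Fintype α] [DecidableEq α]

theorem sum_prod_injective_succ (n : ℕ) (q : Fin (n + 1) → α → ℝ) :
    ∑ x : Fin (n + 1) → α with Function.Injective x, ∏ j, q j (x j) =
      ∑ g : Fin n → α with Function.Injective g,
        (∑ a ∈ (univ.image g)ᶜ, q 0 a) * ∏ j, q j.succ (g j) := by
  rw [sum_filter, sum_filter, ← (Fin.consEquiv fun _ => α).sum_comp, Fintype.sum_prod_type,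
    sum_comm]
  refine sum_congr rfl fun g _ => ?_
  have hcons (a : α) : (Fin.consEquiv fun _ => α) (a, g) = Fin.cons a g := rfl
  have hmem (a : α) : a ∉ Set.range g ↔ a ∈ (univ.image g)ᶜ := by simp
  simp only [hcons, Fin.cons_injective_iff, Fin.prod_univ_succ, Fin.cons_zero, Fin.cons_succ,
    hmem, ite_and]
  split_ifs with hg
  · rw [sum_mul, sum_ite_mem, univ_inter]
  · simp

theorem sum_prod_injective_le_exp {n : ℕ} {q : Fin n → α → ℝ} (hq : ∀ j u, 0 ≤ q j u)
    (hsum : ∀ j, ∑ u, q j u = 1) {p : ℝ} (hp : ∀ j u, p ≤ q j u) :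
    ∑ x : Fin n → α with Function.Injective x, ∏ j, q j (x j) ≤
      Real.exp (-(p * (n * (n - 1) / 2))) := by
  induction n with
  | zero => simpa using card_le_one_of_subsingleton _
  | succ n ih =>
    have hmiss : ∀ g : Fin n → α, Function.Injective g →
        ∑ a ∈ (univ.image g)ᶜ, q 0 a ≤ Real.exp (-(n * p)) := by
      intro g hg
      have hhit : n * p ≤ ∑ a ∈ univ.image g, q 0 a := by
        simpa [card_image_of_injective _ hg] using
          card_nsmul_le_sum (univ.image g) (q 0) p fun a _ => hp 0 a
      have := sum_compl_add_sum (univ.image g) (q 0)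
      linarith [Real.add_one_le_exp (-(n * p)), hsum 0]
    calc _ = ∑ g : Fin n → α with Function.Injective g,
          (∑ a ∈ (univ.image g)ᶜ, q 0 a) * ∏ j, q j.succ (g j) := sum_prod_injective_succ n q
      _ ≤ ∑ g : Fin n → α with Function.Injective g,
          Real.exp (-(n * p)) * ∏ j, q j.succ (g j) :=
        sum_le_sum fun g hg => mul_le_mul_of_nonneg_right (hmiss g (mem_filter.1 hg).2)
          (prod_nonneg fun j _ => hq _ _)
      _ ≤ Real.exp (-(n * p)) * Real.exp (-(p * (n * (n - 1) / 2))) := by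
        rw [← mul_sum]
        exact mul_le_mul_of_nonneg_left (ih (fun j => hq j.succ) (fun j => hsum j.succ)
          (fun j => hp j.succ)) (Real.exp_pos _).le
      _ = Real.exp (-(p * ((n + 1 : ℕ) * ((n + 1 : ℕ) - 1) / 2))) := by
        rw [← Real.exp_add]; push_cast; ring_nf

end Birthday

theorem one_sub_exp_le_probReal_exists_eq {Ω α : Type*} [MeasurableSpace Ω] {P : Measure Ω}
    [IsProbabilityMeasure P] [Finite α] [MeasurableSpace α] [MeasurableSingletonClass α]
    {n : ℕ} {X : Fin n → Ω → α} (hX : ∀ j, Measurable (X j)) (hind : iIndepFun X P) {p : ℝ}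
    (hp : ∀ j u, p ≤ P.real (X j ⁻¹' {u})) :
    1 - Real.exp (-(p * (n * (n - 1) / 2))) ≤ P.real {ω | ∃ i j, i ≠ j ∧ X i ω = X j ω} := by
  classical
  have := Fintype.ofFinite α
  have hY : Measurable fun ω j => X j ω := measurable_pi_lambda _ hX
  set S : Set (Fin n → α) := {x | Function.Injective x}
  have hcoll : {ω | ∃ i j, i ≠ j ∧ X i ω = X j ω} = (fun ω j => X j ω) ⁻¹' Sᶜ := by
    ext ω; simp [S, Function.Injective, and_comm]
  have hS : P.real ((fun ω j => X j ω) ⁻¹' S) =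
      ∑ x : Fin n → α with Function.Injective x, ∏ j, P.real (X j ⁻¹' {x j}) := by
    rw [← map_measureReal_apply hY (Set.toFinite S).measurableSet,
      hind.map_fun_eq_pi_map fun j => (hX j).aemeasurable, ← (Set.toFinite S).coe_toFinset,
      ← sum_measureReal_singleton]
    refine Finset.sum_congr (by ext; simp [S]) fun x _ => ?_
    simp [measureReal_def, ENNReal.toReal_prod,
      Measure.map_apply (hX _) (measurableSet_singleton _)]
  have hlaw : ∀ j, ∑ u, P.real (X j ⁻¹' {u}) = 1 := fun j => by
    rw [sum_measureReal_preimage_singleton _ fun u _ => hX j (measurableSet_singleton u)]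
    simp
  rw [hcoll, Set.preimage_compl,
    probReal_compl_eq_one_sub ((Set.toFinite S).measurableSet.preimage hY), hS]
  gcongr
  exact sum_prod_injective_le_exp (fun _ _ => measureReal_nonneg) hlaw hp

open Metric Set

theorem exists_measurable_nearest {X ι : Type*} [PseudoMetricSpace X] [MeasurableSpace X]
    [OpensMeasurableSpace X] [MeasurableSpace ι] [Finite ι] [Nonempty ι] (c : ι → X) :
    ∃ F : X → ι, Measurable F ∧ ∀ x i, dist x (c (F x)) ≤ dist x (c i) := by
  obtain ⟨N, hN⟩ := Nat.exists_eq_add_one_of_ne_zero (Nat.card_pos (α := ι)).ne'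
  let e : Fin (N + 1) ≃ ι := (finCongr hN).symm.trans (Finite.equivFin ι).symm
  let idx : ℕ → ι := fun k => e (Fin.ofNat (N + 1) k)
  have hidx (i : ι) : idx (e.symm i) = i := by simp [idx]
  refine ⟨idx ∘ SimpleFunc.nearestPtInd (c ∘ idx) N, measurable_from_nat.comp
    (SimpleFunc.measurable _), fun x i => ?_⟩
  have := SimpleFunc.edist_nearestPt_le (c ∘ idx) x (Fin.is_le (e.symm i))
  rw [SimpleFunc.nearestPt, SimpleFunc.map_apply, Function.comp_apply, Function.comp_apply,
    hidx] at this
  rw [dist_comm, dist_comm x]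
  simpa [edist_dist] using this

theorem TotallyBounded.packingNumber_ne_top {X : Type*} [PseudoEMetricSpace X] {A : Set X}
    (hA : TotallyBounded A) {ε : ℝ≥0} (hε : ε ≠ 0) : packingNumber ε A ≠ ⊤ := by
  obtain ⟨N, -, hN, hcover⟩ :=
    exists_finite_isCover_of_totallyBounded (half_pos (pos_iff_ne_zero.2 hε)).ne' hA
  refine ne_top_of_le_ne_top hN.encard_lt_top.ne ?_
  simpa [mul_div_cancel₀] using
    (packingNumber_two_mul_le_externalCoveringNumber (ε / 2) _).trans
      hcover.externalCoveringNumber_le_encard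

theorem exists_measurable_voronoi_partition {X : Type*} [MetricSpace X] [CompactSpace X]
    [Nonempty X] [MeasurableSpace X] [OpensMeasurableSpace X] {r : ℝ} (hr : 0 < r) :
    ∃ (Y : Set X) (F : X → Y), Y.Finite ∧ Measurable F ∧
      (∀ x x', F x = F x' → dist x x' ≤ 2 * r) ∧
      ∀ y : Y, closedBall (y : X) (r / 2) ⊆ F ⁻¹' {y} := by
  lift r to ℝ≥0 using hr.le
  set Y := maximalSeparatedSet r (Set.univ : Set X)
  have hpack := (isCompact_univ (X := X)).totallyBounded.packingNumber_ne_top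
    (pos_iff_ne_zero.1 hr)
  have hY : Y.Finite := by
    rw [← Set.encard_ne_top_iff, encard_maximalSeparatedSet hpack]
    exact hpack
  have hcover : ∀ x : X, ∃ y ∈ Y, dist x y ≤ r := fun x => by
    obtain ⟨y, hy, hxy⟩ := isCover_maximalSeparatedSet hpack (Set.mem_univ x)
    exact ⟨y, hy, by simpa [edist_dist] using hxy⟩
  obtain ⟨y₀, hy₀⟩ := hcover (Classical.arbitrary X)
  have : Nonempty Y := ⟨⟨y₀, hy₀.1⟩⟩
  have := hY.to_subtype
  obtain ⟨F, hFmeas, hF⟩ := exists_measurable_nearest ((↑) : Y → X)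
  have hnear (x : X) : dist x (F x) ≤ r := by
    obtain ⟨y, hy, hxy⟩ := hcover x
    exact (hF x ⟨y, hy⟩).trans hxy
  refine ⟨Y, F, hY, hFmeas, fun x x' hxx' => ?_, fun y z hz => ?_⟩
  · calc dist x x' ≤ dist x (F x) + dist x' (F x) := dist_triangle_right _ _ _
      _ ≤ r + r := add_le_add (hnear x) (hxx' ▸ hnear x')
      _ = 2 * r := by ring
  · -- the centres are more than `r` apart, so `y` is the only centre within `r` of `z`
    by_contra hne
    have hsep : (r : ℝ≥0∞) < edist (F z : X) y :=
      isSeparated_maximalSeparatedSet (F z).2 y.2 (Subtype.coe_ne_coe.2 hne)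
    rw [edist_dist, ENNReal.coe_nnreal_eq,
      ENNReal.ofReal_lt_ofReal_iff_of_nonneg (NNReal.coe_nonneg r)] at hsep
    rw [mem_closedBall] at hz
    linarith [dist_triangle_left (F z : X) y z, hF z y]

theorem geoDist_le_pi_div_two_mul_norm_sub {d : ℕ} {x y : EuclideanSpace ℝ (Fin (d + 1))}
    (hx : ‖x‖ = 1) (hy : ‖y‖ = 1) : geoDist x y ≤ Real.pi / 2 * ‖x - y‖ := by
  have hinner : |⟪x, y⟫| ≤ 1 := by simpa [hx, hy] using abs_real_inner_le_norm x y
  have hθ₀ : 0 ≤ geoDist x y := Real.arccos_nonneg _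
  have hcos : Real.cos (geoDist x y) = ⟪x, y⟫ :=
    Real.cos_arccos (abs_le.1 hinner).1 (abs_le.1 hinner).2
  have hchord : ‖x - y‖ ^ 2 = 2 - 2 * Real.cos (geoDist x y) := by
    rw [norm_sub_sq_real, hx, hy, hcos]; ring
  have hjordan := Real.cos_le_one_sub_mul_cos_sq (x := geoDist x y)
    (abs_le.2 ⟨by linarith [Real.pi_pos], Real.arccos_le_pi ⟪x, y⟫⟩)
  have : geoDist x y ^ 2 ≤ (Real.pi / 2 * ‖x - y‖) ^ 2 := calc
    _ = Real.pi ^ 2 / 2 * (2 / Real.pi ^ 2 * geoDist x y ^ 2) := by field_simp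
    _ ≤ Real.pi ^ 2 / 2 * (1 - Real.cos (geoDist x y)) := by gcongr; linarith
    _ = _ := by rw [mul_pow, hchord]; ring
  exact (pow_le_pow_iff_left₀ hθ₀ (by positivity) two_ne_zero).1 this

theorem mem_Ioo_smul_image_closedBall {E : Type*} [NormedAddCommGroup E] [NormedSpace ℝ E]
    {c : sphere (0 : E) 1} {ρ a : ℝ} {x : E} (hρ : ρ ≤ 1) (ha : a ∈ Icc (1 / 2 : ℝ) (3 / 4))
    (hx : ‖x - a • (c : E)‖ ≤ ρ / 8) :
    x ∈ Ioo (0 : ℝ) 1 • ((↑) '' closedBall c ρ : Set E) := by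
  have hc : ‖(c : E)‖ = 1 := norm_eq_of_mem_sphere c
  have hac : ‖a • (c : E)‖ = a := by
    rw [norm_smul, hc, mul_one, Real.norm_of_nonneg (by linarith [ha.1])]
  have hgap : |‖x‖ - a| ≤ ρ / 8 := hac ▸ (abs_norm_sub_norm_le _ _).trans hx
  obtain ⟨hm₁, hm₂⟩ := abs_le.1 hgap
  set m := ‖x‖
  have hm : 3 / 8 ≤ m := by linarith [ha.1]
  have hu : m⁻¹ • x ∈ sphere (0 : E) 1 := by
    rw [mem_sphere_zero_iff_norm, norm_smul, norm_inv, norm_norm, inv_mul_cancel₀ (by positivity)]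
  refine ⟨m, ⟨by positivity, by linarith [ha.2]⟩, _, ⟨⟨_, hu⟩, ?_, rfl⟩, ?_⟩
  · rw [mem_closedBall, Subtype.dist_eq, dist_eq_norm]
    have : m⁻¹ • x - (c : E) = m⁻¹ • ((x - a • (c : E)) + (a - m) • (c : E)) := by
      rw [show x - a • (c : E) + (a - m) • (c : E) = x - m • (c : E) by module, smul_sub,
        smul_smul, inv_mul_cancel₀ (by positivity), one_smul]
    calc ‖m⁻¹ • x - (c : E)‖ ≤ m⁻¹ * (‖x - a • (c : E)‖ + |a - m|) := by
          rw [this, norm_smul, norm_inv, Real.norm_of_nonneg (norm_nonneg x)]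
          gcongr
          exact (norm_add_le _ _).trans (by rw [norm_smul, hc, mul_one, Real.norm_eq_abs])
      _ ≤ (8 / 3) * (ρ / 8 + ρ / 8) := by
          gcongr
          · exact (inv_le_comm₀ (by positivity) (by norm_num)).2 (by linarith)
          · rw [abs_sub_comm]; exact hgap
      _ ≤ ρ := by linarith [hgap.trans' (abs_nonneg _)]
  · simp [smul_smul, mul_inv_cancel₀ (show m ≠ 0 by positivity)]

theorem EuclideanSpace.volume_setOf_forall_mem {ι : Type*} [Fintype ι] {I : ι → Set ℝ}
    (hI : ∀ i, MeasurableSet (I i)) :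
    volume {x : EuclideanSpace ℝ ι | ∀ i, x i ∈ I i} = ∏ i, volume (I i) := by
  rw [← volume_pi_pi, ← (PiLp.volume_preserving_ofLp ι).measure_preimage
    (MeasurableSet.univ_pi hI).nullMeasurableSet]
  congr 1; ext; simp

theorem EuclideanSpace.norm_le_sqrt_card_mul {ι : Type*} [Fintype ι] {v : EuclideanSpace ℝ ι}
    {s : ℝ} (hs : 0 ≤ s) (hv : ∀ i, |v i| ≤ s) : ‖v‖ ≤ √(Fintype.card ι) * s := by
  rw [EuclideanSpace.norm_eq, ← Real.sqrt_sq hs, ← Real.sqrt_mul (Nat.cast_nonneg _)]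
  refine Real.sqrt_le_sqrt ?_
  simpa using Finset.sum_le_sum fun i (_ : i ∈ Finset.univ) =>
    sq_le_sq' (abs_le.1 (hv i)).1 (abs_le.1 (hv i)).2

theorem ofReal_le_volume_Ioo_smul_closedBall {d : ℕ}
    (c : sphere (0 : EuclideanSpace ℝ (Fin (d + 1))) 1) {ρ : ℝ} (hρ₀ : 0 < ρ) (hρ₁ : ρ ≤ 1) :
    ENNReal.ofReal ((ρ / (4 * √(d + 1))) ^ d / 4) ≤
      volume (Ioo (0 : ℝ) 1 • ((↑) '' closedBall c ρ : Set (EuclideanSpace ℝ (Fin (d + 1))))) := by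
  -- The box `[1/2, 3/4] × [-s, s] ^ d` is thick along `e₀`, so its volume is `≍ ρ ^ d`; the
  -- reflection exchanging `e₀` and `c` maps it into the cone over the cap.
  set s := ρ / (8 * √(d + 1))
  have hs : 0 ≤ s := by positivity
  set I : Fin (d + 1) → Set ℝ := Fin.cons (Icc (1 / 2) (3 / 4)) fun _ => Icc (-s) s
  have hvol : volume {x : EuclideanSpace ℝ (Fin (d + 1)) | ∀ i, x i ∈ I i} =
      ENNReal.ofReal ((ρ / (4 * √(d + 1))) ^ d / 4) := by
    rw [EuclideanSpace.volume_setOf_forall_mem fun i => Fin.cases measurableSet_Icc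
      (fun _ => measurableSet_Icc) i, Fin.prod_univ_succ]
    simp only [I, Fin.cons_zero, Fin.cons_succ, Real.volume_Icc, Finset.prod_const,
      Finset.card_univ, Fintype.card_fin]
    rw [← ENNReal.ofReal_pow (by linarith), ← ENNReal.ofReal_mul (by norm_num)]
    congr 1
    rw [show s - -s = ρ / (4 * √(d + 1)) by simp only [s]; field_simp; ring]
    ring
  set e₀ : EuclideanSpace ℝ (Fin (d + 1)) := EuclideanSpace.single 0 1
  set R := (ℝ ∙ ((c : EuclideanSpace ℝ (Fin (d + 1))) - e₀))ᗮ.reflection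
  have hRe : R e₀ = c := by
    have hRc : R c = e₀ := Submodule.reflection_sub (by simp [e₀, norm_eq_of_mem_sphere c])
    rw [← hRc, Submodule.reflection_reflection]
  have hsub : {x : EuclideanSpace ℝ (Fin (d + 1)) | ∀ i, x i ∈ I i} ⊆
      R ⁻¹' (Ioo (0 : ℝ) 1 • ((↑) '' closedBall c ρ)) := fun x hx => by
    refine mem_Ioo_smul_image_closedBall hρ₁ (hx 0) ?_
    rw [← hRe, ← map_smul, ← map_sub, LinearIsometryEquiv.norm_map]
    calc ‖x - x 0 • e₀‖ ≤ √(Fintype.card (Fin (d + 1))) * s :=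
          EuclideanSpace.norm_le_sqrt_card_mul hs fun i => ?_
      _ = ρ / 8 := by simp only [s, Fintype.card_fin]; push_cast; field_simp
    induction i using Fin.cases with
    | zero => simpa [e₀] using hs
    | succ j => simpa [e₀, abs_le, I] using hx j.succ
  calc _ = volume {x : EuclideanSpace ℝ (Fin (d + 1)) | ∀ i, x i ∈ I i} := hvol.symm
    _ ≤ volume.map R (Ioo (0 : ℝ) 1 • ((↑) '' closedBall c ρ)) :=
      (measure_mono hsub).trans (Measure.le_map_apply R.continuous.aemeasurable _)
    _ = _ := by rw [R.measurePreserving.map_eq]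

theorem unifSphere_apply {d : ℕ} {A : Set (sphere (0 : EuclideanSpace ℝ (Fin (d + 1))) 1)}
    (hA : MeasurableSet A) :
    unifSphere d A = volume (Ioo (0 : ℝ) 1 • ((↑) '' A : Set (EuclideanSpace ℝ (Fin (d + 1))))) /
      volume (ball (0 : EuclideanSpace ℝ (Fin (d + 1))) 1) := by
  rw [unifSphere, Measure.smul_apply, smul_eq_mul, Measure.toSphere_apply' _ hA,
    Measure.toSphere_apply_univ, ← ENNReal.div_eq_inv_mul, ENNReal.mul_div_mul_left _ _ (by simp)
    (by simp)]

theorem exists_pos_ofReal_mul_pow_le_unifSphere_closedBall (d : ℕ) :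
    ∃ κ : ℝ, 0 < κ ∧ ∀ (c : sphere (0 : EuclideanSpace ℝ (Fin (d + 1))) 1) (ρ : ℝ),
      0 < ρ → ρ ≤ 1 → ENNReal.ofReal (κ * ρ ^ d) ≤ unifSphere d (closedBall c ρ) := by
  set V := volume (ball (0 : EuclideanSpace ℝ (Fin (d + 1))) 1)
  have hV : 0 < V.toReal :=
    ENNReal.toReal_pos (measure_ball_pos _ _ one_pos).ne' measure_ball_lt_top.ne
  refine ⟨(1 / (4 * √(d + 1))) ^ d / 4 / V.toReal, by positivity, fun c ρ hρ₀ hρ₁ => ?_⟩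
  rw [unifSphere_apply measurableSet_closedBall]
  calc ENNReal.ofReal ((1 / (4 * √(d + 1))) ^ d / 4 / V.toReal * ρ ^ d)
      = ENNReal.ofReal ((ρ / (4 * √(d + 1))) ^ d / 4) / V := by
        rw [div_mul_eq_mul_div, ENNReal.ofReal_div_of_pos hV,
          ENNReal.ofReal_toReal measure_ball_lt_top.ne]
        congr 2
        ring
    _ ≤ _ := ENNReal.div_le_div_right (ofReal_le_volume_Ioo_smul_closedBall c hρ₀ hρ₁) _

theorem one_sub_exp_le_probReal_exists_geoDist_le {d : ℕ} {κ : ℝ}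
    (hcap : ∀ (c : sphere (0 : EuclideanSpace ℝ (Fin (d + 1))) 1) (ρ : ℝ), 0 < ρ → ρ ≤ 1 →
      ENNReal.ofReal (κ * ρ ^ d) ≤ unifSphere d (closedBall c ρ))
    {r : ℝ} (hr₀ : 0 < r) (hr₂ : r ≤ 2) {Ω : Type*} [MeasurableSpace Ω] {P : Measure Ω}
    [IsProbabilityMeasure P] {n : ℕ}
    {θ : Fin n → Ω → sphere (0 : EuclideanSpace ℝ (Fin (d + 1))) 1} (hθ : ∀ j, Measurable (θ j))
    (hind : iIndepFun θ P) (hlaw : ∀ j, P.map (θ j) = unifSphere d) :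
    1 - Real.exp (-(κ * (r / 2) ^ d * (n * (n - 1) / 2))) ≤
      P.real {ω | ∃ i j, i ≠ j ∧
        geoDist (θ i ω : EuclideanSpace ℝ (Fin (d + 1))) (θ j ω) ≤ Real.pi * r} := by
  have : Nonempty (sphere (0 : EuclideanSpace ℝ (Fin (d + 1))) 1) :=
    ⟨⟨EuclideanSpace.single 0 1, by simp⟩⟩
  obtain ⟨Y, F, hY, hF, hdiam, hball⟩ := exists_measurable_voronoi_partition
    (X := sphere (0 : EuclideanSpace ℝ (Fin (d + 1))) 1) hr₀
  have := hY.to_subtype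
  have hcell (j : Fin n) (u : Y) : κ * (r / 2) ^ d ≤ P.real (F ∘ θ j ⁻¹' {u}) := by
    rw [Set.preimage_comp, measureReal_def,
      ← Measure.map_apply (hθ j) (hF (measurableSet_singleton u)), hlaw j]
    refine (ENNReal.ofReal_le_iff_le_toReal ?_).1
      ((hcap u (r / 2) (by positivity) (by linarith)).trans (measure_mono (hball u)))
    rw [← hlaw j]; exact measure_ne_top _ _
  refine (one_sub_exp_le_probReal_exists_eq (fun j => hF.comp (hθ j))
    (hind.comp (fun _ => F) fun _ => hF) hcell).trans
    (measureReal_mono fun ω ⟨i, j, hij, hFij⟩ => ⟨i, j, hij, ?_⟩)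
  calc geoDist (θ i ω : EuclideanSpace ℝ (Fin (d + 1))) (θ j ω)
      ≤ Real.pi / 2 * dist (θ i ω) (θ j ω) :=
        geoDist_le_pi_div_two_mul_norm_sub (norm_eq_of_mem_sphere _) (norm_eq_of_mem_sphere _)
    _ ≤ Real.pi / 2 * (2 * r) := by gcongr; exact hdiam _ _ hFij
    _ = Real.pi * r := by ring

theorem probReal_exists_geoDist_le_of_pi_le {d : ℕ} {Ω : Type*} [MeasurableSpace Ω]
    {P : Measure Ω} [IsProbabilityMeasure P] {n : ℕ} (hn : 2 ≤ n)
    (θ : Fin n → Ω → sphere (0 : EuclideanSpace ℝ (Fin (d + 1))) 1) {b : ℝ} (hb : Real.pi ≤ b) :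
    P.real {ω | ∃ i j, i ≠ j ∧ geoDist (θ i ω : EuclideanSpace ℝ (Fin (d + 1))) (θ j ω) ≤ b} =
      1 := by
  convert probReal_univ (μ := P)
  exact eq_univ_of_forall fun ω => ⟨⟨0, by omega⟩, ⟨1, by omega⟩, by simp [Fin.ext_iff],
    (Real.arccos_le_pi _).trans hb⟩

theorem exp_neg_log_one_div_mul_le {δ t : ℝ} (hδ₀ : 0 < δ) (hδ₁ : δ ≤ 1) (ht : 1 ≤ t) :
    Real.exp (-(Real.log (1 / δ) * t)) ≤ δ := calc
  _ ≤ Real.exp (-Real.log (1 / δ)) := Real.exp_le_exp.2 <| neg_le_neg <|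
    le_mul_of_one_le_right (Real.log_nonneg (one_le_one_div hδ₀ hδ₁)) ht
  _ = δ := by rw [one_div, Real.log_inv, neg_neg, Real.exp_log hδ₀]

/-- for i.i.d. uniform points `θ₁,…,θ_n` on `S^d`, with probability at least
`1-δ` the separation distance satisfies `min_{i≠j} ρ(θ_i,θ_j) ≲ (log(1/δ)/n²)^{1/d}`,
the constant depending only on `d`; i.e. some pair of points is at geodesic distance
at most `C_d (log(1/δ)/n²)^{1/d}` (order `n^{-2/d}`, not `n^{-1/d}`). -/
theorem separation_distance_random_points (d : ℕ) (hd : 1 ≤ d) :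
    ∃ Cd : ℝ, 0 < Cd ∧
      ∀ (Ω : Type) (mΩ : MeasurableSpace Ω) (P : Measure Ω), IsProbabilityMeasure P →
        ∀ (n : ℕ), 2 ≤ n → ∀ (δ : ℝ), 0 < δ → δ < 1 →
          ∀ (θ : Fin n → Ω → Metric.sphere (0 : EuclideanSpace ℝ (Fin (d + 1))) 1),
            (∀ j, Measurable (θ j)) →
            iIndepFun θ P →
            (∀ j, Measure.map (θ j) P = unifSphere d) →
            1 - δ ≤
              (P {ω | ∃ i j : Fin n, i ≠ j ∧
                  geoDist ((θ i ω : EuclideanSpace ℝ (Fin (d + 1))))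
                      (θ j ω) ≤
                    Cd * (Real.log (1 / δ) / (n ^ 2 : ℕ)) ^ (1 / (d : ℝ))}).toReal := by
  obtain ⟨κ, hκ, hcap⟩ := exists_pos_ofReal_mul_pow_le_unifSphere_closedBall d
  refine ⟨2 * Real.pi * (4 / κ) ^ (1 / (d : ℝ)), by positivity, ?_⟩
  intro Ω _ P _ n hn δ hδ₀ hδ₁ θ hθ hind hlaw
  have hL : 0 < Real.log (1 / δ) := Real.log_pos (one_lt_one_div hδ₀ hδ₁)
  have hn' : (2 : ℝ) ≤ n := by exact_mod_cast hn
  -- the scale at which a cap of radius `r / 2` has mass `κ (r / 2) ^ d = 4 log (1 / δ) / n ^ 2`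
  set r := 2 * (4 / κ * (Real.log (1 / δ) / (n ^ 2 : ℕ))) ^ (1 / (d : ℝ)) with hr_def
  rw [show 2 * Real.pi * (4 / κ) ^ (1 / (d : ℝ)) * (Real.log (1 / δ) / (n ^ 2 : ℕ)) ^ (1 / (d : ℝ))
      = Real.pi * r by rw [hr_def, Real.mul_rpow (by positivity) (by positivity)]; ring,
    ← measureReal_def]
  rcases le_or_gt r 2 with hr | hr
  · have hmass : κ * (r / 2) ^ d * (n * (n - 1) / 2) = Real.log (1 / δ) * (2 * (n - 1) / n) := by
      rw [hr_def, mul_div_cancel_left₀ _ two_ne_zero, one_div (d : ℝ),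
        Real.rpow_inv_natCast_pow (by positivity) (by omega)]
      push_cast; field_simp; ring
    have hcoll := one_sub_exp_le_probReal_exists_geoDist_le hcap (by positivity) hr hθ hind hlaw
    rw [hmass] at hcoll
    linarith [exp_neg_log_one_div_mul_le hδ₀ hδ₁.le
      ((one_le_div (by positivity)).2 (by linarith) : (1 : ℝ) ≤ 2 * (n - 1) / n)]
  · rw [probReal_exists_geoDist_le_of_pi_le hn θ (by nlinarith [Real.pi_pos])]
    linarith
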